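/- arXiv:2604.17693 — 3 statements merged into one kernel-verified Lean document; each statement's English description precedes it below -/
import Mathlib

section
/- (Bias bound, general form) Let ε(a) = f̂(a) - f(a) be the residual of the additive approximation, bounded in sup norm by ‖ε‖_∞. Define Δ_k(a_{≤k}) = (E_{π_{>k}|a_{≤k}}[f̂] - E_{π_{>k}|a_{≤k}}[f]) - (E_{π_{≥k}|a_{<k}}[f̂] - E_{π_{≥k}|a_{<k}}[f]). Then |Δ_k(a_{≤k})| ≤ E_{π_{≥k}|a_{<k}}[δ_k^ε(a_{-k})] + ‖ε‖_∞ · max_{a_k,a_k'} ‖π_{>k}(·|a_{<k},a_k) - π_{>k}(·|a_{<k},a_k')‖_1, where δ_k^ε(a_{-k}) = max_{a_k,a_k'}|ε(a_{<k},a_k,a_{>k}) - ε(a_{<k},a_k',a_{>k})|. -/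
open Finset

/-- Advantage bias bound, general form.
Prefix `p : P`, focal action `a : A`, suffix `s : S`; `πgt p a` is the suffix
distribution `π_{>k}(·|a_{<k},a_k)` and `πk p` is the focal distribution
`π_k(·|a_{<k})`, so `π_{≥k}(·|a_{<k})` has weights `πk p a' * πgt p a' s`.
With residual `ε = f̂ - f` bounded by `C` in sup norm,
`Δ_k(p,a) = (E_{π_{>k}|p,a}[f̂] - E_{π_{>k}|p,a}[f])
          - (E_{π_{≥k}|p}[f̂] - E_{π_{≥k}|p}[f])`
satisfies `|Δ_k| ≤ E_{π_{≥k}|p}[δ^ε(p,s)] + C · max_{a₁,a₂} ‖πgt(·|p,a₁) - πgt(·|p,a₂)‖₁`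
where `δ^ε(p,s) = max_{a₁,a₂} |ε(p,a₁,s) - ε(p,a₂,s)|`. -/
theorem stmt7_bias_bound_general
    {P A S : Type*} [Fintype A] [Fintype S] [Nonempty A]
    (πgt : P → A → S → ℝ)
    (hπgt_nonneg : ∀ p a s, 0 ≤ πgt p a s) (hπgt_sum : ∀ p a, ∑ s, πgt p a s = 1)
    (πk : P → A → ℝ)
    (hπk_nonneg : ∀ p a, 0 ≤ πk p a) (hπk_sum : ∀ p, ∑ a, πk p a = 1)
    (f fhat : P → A → S → ℝ)
    (ε : P → A → S → ℝ) (hε : ∀ p a s, ε p a s = fhat p a s - f p a s)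
    (C : ℝ) (hC : ∀ p a s, |ε p a s| ≤ C)
    -- residual sensitivity to the focal action
    (δ : P → S → ℝ)
    (hδ : ∀ p s, δ p s =
      (univ ×ˢ univ).sup' (univ_nonempty.product univ_nonempty)
        (fun q : A × A => |ε p q.1 s - ε p q.2 s|))
    -- the advantage bias
    (Δ : P → A → ℝ)
    (hΔ : ∀ p a, Δ p a =
      ((∑ s, πgt p a s * fhat p a s) - ∑ s, πgt p a s * f p a s)
      - ((∑ a', ∑ s, πk p a' * πgt p a' s * fhat p a' s)
          - ∑ a', ∑ s, πk p a' * πgt p a' s * f p a' s)) :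
    ∀ p a, |Δ p a| ≤
      (∑ a', ∑ s, πk p a' * πgt p a' s * δ p s)
      + C * (univ ×ˢ univ).sup' (univ_nonempty.product univ_nonempty)
          (fun q : A × A => ∑ s, |πgt p q.1 s - πgt p q.2 s|) := by
  intro p a
  have hS : Nonempty S := by
    by_contra h
    rw [not_nonempty_iff] at h
    have := hπgt_sum p a
    simp [Finset.sum_empty, Finset.univ_eq_empty] at this
  have hC0 : 0 ≤ C := (abs_nonneg _).trans (hC p a (Classical.arbitrary S))
  set M := (univ ×ˢ univ).sup' (univ_nonempty.product univ_nonempty)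
      (fun q : A × A => ∑ s, |πgt p q.1 s - πgt p q.2 s|) with hM
  have hMle : ∀ a1 a2 : A, ∑ s, |πgt p a1 s - πgt p a2 s| ≤ M := fun a1 a2 =>
    le_sup' (fun q : A × A => ∑ s, |πgt p q.1 s - πgt p q.2 s|)
      (by simp : ((a1, a2) : A × A) ∈ univ ×ˢ univ)
  have hδle : ∀ a1 a2 s, |ε p a1 s - ε p a2 s| ≤ δ p s := fun a1 a2 s => by
    rw [hδ]
    exact le_sup' (fun q : A × A => |ε p q.1 s - ε p q.2 s|)
      (by simp : ((a1, a2) : A × A) ∈ univ ×ˢ univ)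
  have hf : ∀ a' s, fhat p a' s = f p a' s + ε p a' s := fun a' s => by
    rw [hε]; ring
  set X : ℝ := ∑ s, πgt p a s * ε p a s with hX
  set Y : A → ℝ := fun a' => ∑ s, πgt p a' s * ε p a' s with hY
  have h1 : (∑ s, πgt p a s * fhat p a s) - ∑ s, πgt p a s * f p a s = X := by
    rw [hX, ← Finset.sum_sub_distrib]
    exact Finset.sum_congr rfl fun s _ => by rw [hε]; ring
  have h2 : ((∑ a', ∑ s, πk p a' * πgt p a' s * fhat p a' s)
      - ∑ a', ∑ s, πk p a' * πgt p a' s * f p a' s) = ∑ a', πk p a' * Y a' := by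
    rw [← Finset.sum_sub_distrib]
    apply Finset.sum_congr rfl
    intro a' _
    simp only [hY]
    rw [Finset.mul_sum, ← Finset.sum_sub_distrib]
    exact Finset.sum_congr rfl fun s _ => by rw [hε]; ring
  have hΔeq : Δ p a = ∑ a', πk p a' * (X - Y a') := by
    rw [hΔ, h1, h2]
    simp only [mul_sub, Finset.sum_sub_distrib, ← Finset.sum_mul, hπk_sum p, one_mul]
  have hT : ∀ a', |X - Y a'| ≤ (∑ s, πgt p a' s * δ p s) + C * M := by
    intro a'
    have heq : X - Y a' = ∑ s, (πgt p a' s * (ε p a s - ε p a' s)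
        + (πgt p a s - πgt p a' s) * ε p a s) := by
      rw [hX, hY, ← Finset.sum_sub_distrib]
      apply Finset.sum_congr rfl; intros; ring
    rw [heq]
    calc |∑ s, (πgt p a' s * (ε p a s - ε p a' s) + (πgt p a s - πgt p a' s) * ε p a s)|
        ≤ ∑ s, |πgt p a' s * (ε p a s - ε p a' s) + (πgt p a s - πgt p a' s) * ε p a s| :=
          Finset.abs_sum_le_sum_abs _ _
      _ ≤ ∑ s, (πgt p a' s * δ p s + |πgt p a s - πgt p a' s| * C) := by
          apply Finset.sum_le_sum
          intro s _
          refine (abs_add_le _ _).trans (add_le_add ?_ ?_)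
          · rw [abs_mul, abs_of_nonneg (hπgt_nonneg p a' s)]
            exact mul_le_mul_of_nonneg_left (hδle a a' s) (hπgt_nonneg p a' s)
          · rw [abs_mul]
            exact mul_le_mul_of_nonneg_left (hC p a s) (abs_nonneg _)
      _ = (∑ s, πgt p a' s * δ p s) + (∑ s, |πgt p a s - πgt p a' s|) * C := by
          rw [Finset.sum_add_distrib, Finset.sum_mul]
      _ ≤ (∑ s, πgt p a' s * δ p s) + C * M := by
          rw [mul_comm]
          exact add_le_add_right (mul_le_mul_of_nonneg_left (hMle a a') hC0) _
  calc |Δ p a| = |∑ a', πk p a' * (X - Y a')| := by rw [hΔeq]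
    _ ≤ ∑ a', |πk p a' * (X - Y a')| := Finset.abs_sum_le_sum_abs _ _
    _ ≤ ∑ a', πk p a' * ((∑ s, πgt p a' s * δ p s) + C * M) := by
        apply Finset.sum_le_sum
        intro a' _
        rw [abs_mul, abs_of_nonneg (hπk_nonneg p a')]
        exact mul_le_mul_of_nonneg_left (hT a') (hπk_nonneg p a')
    _ = (∑ a', ∑ s, πk p a' * πgt p a' s * δ p s) + C * M := by
        simp only [mul_add, Finset.sum_add_distrib, Finset.mul_sum, ← Finset.sum_mul,
          hπk_sum p, one_mul, mul_assoc]
end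

section
/- (Bias bound, factored specialization) Suppose both target and logging policies factor across agents: π(a) = Π_j π_j(a_j), μ(a) = Π_j μ_j(a_j). Let ε be bounded by ‖ε‖_∞, and define the advantage bias Δ_k(a_k) as the difference between the additive-model advantage computed with expectations under the product measure formed from π and the true advantage. Then |Δ_k(a_k)| ≤ 2(K-1)·δ̄·‖ε‖_∞, where δ̄ = max_j ‖π_j - μ_j‖_1. -/
open Finset

lemma prod_sub_prod_telescope {ι : Type*} [LinearOrder ι] (s : Finset ι) (f g : ι → ℝ) :
    ∏ i ∈ s, f i - ∏ i ∈ s, g i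
      = ∑ j ∈ s, (∏ i ∈ s.filter (· < j), f i) * (f j - g j) * ∏ i ∈ s.filter (j < ·), g i := by
  classical
  induction s using Finset.induction_on_min with
  | empty => simp
  | insert a s ha ih =>
    have haS : a ∉ s := fun h => lt_irrefl a (ha a h)
    rw [Finset.sum_insert haS, Finset.prod_insert haS, Finset.prod_insert haS]
    have h1 : (insert a s).filter (· < a) = ∅ := by
      ext i
      simp only [Finset.mem_filter, Finset.mem_insert, Finset.notMem_empty, iff_false]
      rintro ⟨h | h, hlt⟩
      · exact lt_irrefl a (h ▸ hlt)
      · exact lt_asymm (ha i h) hlt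
    have h2 : (insert a s).filter (a < ·) = s := by
      ext i
      simp only [Finset.mem_filter, Finset.mem_insert]
      constructor
      · rintro ⟨h | h, hlt⟩
        · exact absurd hlt (h ▸ lt_irrefl a)
        · exact h
      · exact fun h => ⟨Or.inr h, ha i h⟩
    have h3 : ∀ j ∈ s, (insert a s).filter (· < j) = insert a (s.filter (· < j)) := by
      intro j hj
      ext i
      simp only [Finset.mem_filter, Finset.mem_insert]
      constructor
      · rintro ⟨h | h, hlt⟩
        · exact Or.inl h
        · exact Or.inr ⟨h, hlt⟩
      · rintro (rfl | ⟨h, hlt⟩)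
        · exact ⟨Or.inl rfl, ha j hj⟩
        · exact ⟨Or.inr h, hlt⟩
    have h4 : ∀ j ∈ s, (insert a s).filter (j < ·) = s.filter (j < ·) := by
      intro j hj
      ext i
      simp only [Finset.mem_filter, Finset.mem_insert]
      constructor
      · rintro ⟨h | h, hlt⟩
        · exact absurd hlt (h ▸ (lt_asymm (ha j hj)))
        · exact ⟨h, hlt⟩
      · exact fun ⟨h, hlt⟩ => ⟨Or.inr h, hlt⟩
    rw [h1, h2, Finset.prod_empty, one_mul,
      Finset.sum_congr rfl fun j hj => by
        rw [h3 j hj, h4 j hj, Finset.prod_insert (fun h => haS (Finset.mem_filter.mp h).1)]]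
    have : ∑ j ∈ s, (f a * ∏ x ∈ s.filter (· < j), f x) * (f j - g j) * ∏ i ∈ s.filter (j < ·), g i
        = f a * ∑ j ∈ s, (∏ x ∈ s.filter (· < j), f x) * (f j - g j) * ∏ i ∈ s.filter (j < ·), g i := by
      rw [Finset.mul_sum]; exact Finset.sum_congr rfl fun j hj => by ring
    rw [this, ← ih]
    ring

lemma sum_fiber_prod_erase {K : ℕ} (A : Fin K → Type*) [∀ i, Fintype (A i)]
    [∀ i, DecidableEq (A i)] (k : Fin K) (ak : A k) (v : (j : Fin K) → A j → ℝ) :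
    ∑ b ∈ univ.filter (fun b : (i : Fin K) → A i => b k = ak),
        ∏ j ∈ univ.erase k, v j (b j)
      = ∏ j ∈ univ.erase k, ∑ a, v j a := by
  classical
  set v' : (j : Fin K) → A j → ℝ :=
    Function.update v k (fun a => if a = ak then (1:ℝ) else 0) with hv'
  have h1 : ∀ b : (i : Fin K) → A i,
      ∏ j, v' j (b j) = (if b k = ak then 1 else 0) * ∏ j ∈ univ.erase k, v j (b j) := by
    intro b
    rw [← Finset.mul_prod_erase univ _ (mem_univ k)]
    congr 1
    · simp [hv']
    · exact Finset.prod_congr rfl fun j hj => by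
        rw [hv', Function.update_of_ne (Finset.ne_of_mem_erase hj)]
  have h2 : ∏ j, ∑ a, v' j a = ∑ b : (i : Fin K) → A i, ∏ j, v' j (b j) :=
    Finset.prod_univ_sum (fun _ => univ) _
  calc ∑ b ∈ univ.filter (fun b : (i : Fin K) → A i => b k = ak),
        ∏ j ∈ univ.erase k, v j (b j)
      = ∑ b : (i : Fin K) → A i, ∏ j, v' j (b j) := by
        rw [Finset.sum_filter]
        exact Finset.sum_congr rfl fun b _ => by rw [h1 b]; split <;> simp
    _ = ∏ j, ∑ a, v' j a := h2.symm
    _ = ∏ j ∈ univ.erase k, ∑ a, v j a := by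
        rw [← Finset.mul_prod_erase univ _ (mem_univ k)]
        have : ∑ a, v' k a = 1 := by simp [hv']
        rw [this, one_mul]
        exact Finset.prod_congr rfl fun j hj =>
          Finset.sum_congr rfl fun a _ => by
            rw [hv', Function.update_of_ne (Finset.ne_of_mem_erase hj)]

/-- Bias bound, factored specialization.
Both target and logging policies factor across the `K` agents:
`π(b) = ∏_j π_j(b_j)`, `μ(b) = ∏_j μ_j(b_j)`.  `E w h ak` denotes the
expectation of `h` over the coordinates other than `k` under the product of
the `w_j`, with coordinate `k` held at `ak`.  The advantage bias at agent `k`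
is the measure-change channel
`Δ(a_k) = (E_{π_{-k}}[ε|a_k] - E_{μ_{-k}}[ε|a_k])
        - E_{a'~π_k}[E_{π_{-k}}[ε|a'] - E_{μ_{-k}}[ε|a']]`
(the total-variation channel vanishes under factored policies).  With
`‖ε‖_∞ ≤ C` and `‖π_j - μ_j‖₁ ≤ δ̄` for all `j`,
`|Δ(a_k)| ≤ 2(K-1)·δ̄·C`. -/
theorem stmt9_bias_bound_factored
    {K : ℕ} (A : Fin K → Type*) [∀ i, Fintype (A i)] [∀ i, DecidableEq (A i)]
    (π μ : (j : Fin K) → A j → ℝ)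
    (hπ_nonneg : ∀ j a, 0 ≤ π j a) (hπ_sum : ∀ j, ∑ a, π j a = 1)
    (hμ_nonneg : ∀ j a, 0 ≤ μ j a) (hμ_sum : ∀ j, ∑ a, μ j a = 1)
    (ε : ((i : Fin K) → A i) → ℝ)
    (C : ℝ) (hC : ∀ b, |ε b| ≤ C)
    (δbar : ℝ) (hδ : ∀ j, ∑ a, |π j a - μ j a| ≤ δbar)
    (k : Fin K)
    -- expectation over the coordinates ≠ k, coordinate k fixed
    (E : ((j : Fin K) → A j → ℝ) → (((i : Fin K) → A i) → ℝ) → A k → ℝ)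
    (hE : ∀ w h ak, E w h ak =
      ∑ b ∈ univ.filter (fun b => b k = ak),
        (∏ j ∈ univ.erase k, w j (b j)) * h b)
    (Δ : A k → ℝ)
    (hΔ : ∀ ak, Δ ak =
      (E π ε ak - E μ ε ak) - ∑ a', π k a' * (E π ε a' - E μ ε a')) :
    ∀ ak, |Δ ak| ≤ 2 * ((K : ℝ) - 1) * δbar * C := by
  classical
  have hne : ∀ i, Nonempty (A i) := by
    intro i
    by_contra h
    rw [not_nonempty_iff] at h
    have h1 := hπ_sum i
    rw [Finset.univ_eq_empty, Finset.sum_empty] at h1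
    exact one_ne_zero h1.symm
  have hC0 : 0 ≤ C := le_trans (abs_nonneg _) (hC fun i => (hne i).some)
  have hδ0 : 0 ≤ δbar := le_trans (Finset.sum_nonneg fun a _ => abs_nonneg _) (hδ k)
  have hK : 1 ≤ K := k.pos
  set S := (univ : Finset (Fin K)).erase k with hSdef
  have hScard : (S.card : ℝ) = (K : ℝ) - 1 := by
    rw [hSdef, Finset.card_erase_of_mem (mem_univ k), Finset.card_univ, Fintype.card_fin,
      Nat.cast_sub hK, Nat.cast_one]
  -- mixed weights
  set v : Fin K → (i : Fin K) → A i → ℝ := fun j i a =>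
    if i < j then π i a else if i = j then |π i a - μ i a| else μ i a with hv
  have hcol : ∀ j ∈ S, ∏ i ∈ S, ∑ a, v j i a ≤ δbar := by
    intro j hj
    rw [← Finset.mul_prod_erase S _ hj]
    have hjj : ∑ a, v j j a = ∑ a, |π j a - μ j a| := by
      refine Finset.sum_congr rfl fun a _ => ?_
      simp [hv]
    have hrest : ∏ i ∈ S.erase j, ∑ a, v j i a = 1 := by
      refine Finset.prod_eq_one fun i hi => ?_
      have hij : i ≠ j := Finset.ne_of_mem_erase hi
      rcases lt_trichotomy i j with h | h | h
      · have e : ∑ a, v j i a = ∑ a, π i a :=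
          Finset.sum_congr rfl fun a _ => by simp [hv, h]
        rw [e]; exact hπ_sum i
      · exact absurd h hij
      · have h1 : ¬ i < j := not_lt_of_gt h
        have e : ∑ a, v j i a = ∑ a, μ i a :=
          Finset.sum_congr rfl fun a _ => by simp [hv, h1, hij]
        rw [e]; exact hμ_sum i
    rw [hjj, hrest, mul_one]
    exact hδ j
  -- key bound
  have key : ∀ a' : A k, |E π ε a' - E μ ε a'| ≤ ((K : ℝ) - 1) * δbar * C := by
    intro a'
    rw [hE, hE, ← Finset.sum_sub_distrib]
    have pointwise : ∀ b : (i : Fin K) → A i,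
        |∏ i ∈ S, π i (b i) - ∏ i ∈ S, μ i (b i)| ≤ ∑ j ∈ S, ∏ i ∈ S, v j i (b i) := by
      intro b
      rw [prod_sub_prod_telescope S (fun i => π i (b i)) (fun i => μ i (b i))]
      refine le_trans (Finset.abs_sum_le_sum_abs _ _) (Finset.sum_le_sum fun j hj => ?_)
      have hsplit : ∏ i ∈ S, v j i (b i)
          = (∏ i ∈ S.filter (· < j), v j i (b i)) * ∏ i ∈ S.filter (¬ · < j), v j i (b i) :=
        (Finset.prod_filter_mul_prod_filter_not S _ _).symm
      have hset : S.filter (¬ · < j) = insert j (S.filter (j < ·)) := by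
        ext i
        simp only [Finset.mem_filter, Finset.mem_insert]
        constructor
        · rintro ⟨hi, hnlt⟩
          rcases lt_trichotomy i j with h | h | h
          · exact absurd h hnlt
          · exact Or.inl h
          · exact Or.inr ⟨hi, h⟩
        · rintro (rfl | ⟨hi, hlt⟩)
          · exact ⟨hj, lt_irrefl i⟩
          · exact ⟨hi, not_lt_of_gt hlt⟩
      have hjnot : j ∉ S.filter (j < ·) := fun h =>
        lt_irrefl j (Finset.mem_filter.mp h).2
      rw [hsplit, hset, Finset.prod_insert hjnot]
      have e1 : ∏ i ∈ S.filter (· < j), v j i (b i) = ∏ i ∈ S.filter (· < j), π i (b i) :=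
        Finset.prod_congr rfl fun i hi => by simp [hv, (Finset.mem_filter.mp hi).2]
      have e2 : v j j (b j) = |π j (b j) - μ j (b j)| := by simp [hv]
      have e3 : ∏ i ∈ S.filter (j < ·), v j i (b i) = ∏ i ∈ S.filter (j < ·), μ i (b i) :=
        Finset.prod_congr rfl fun i hi => by
          have h := (Finset.mem_filter.mp hi).2
          simp [hv, not_lt_of_gt h, ne_of_gt h]
      rw [e1, e2, e3, abs_mul, abs_mul]
      rw [abs_of_nonneg (Finset.prod_nonneg fun i _ => hπ_nonneg i (b i)),
        abs_of_nonneg (Finset.prod_nonneg fun i _ => hμ_nonneg i (b i))]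
      exact le_of_eq (mul_assoc _ _ _)
    calc |∑ b ∈ univ.filter (fun b : (i : Fin K) → A i => b k = a'),
            ((∏ j ∈ univ.erase k, π j (b j)) * ε b - (∏ j ∈ univ.erase k, μ j (b j)) * ε b)|
        ≤ ∑ b ∈ univ.filter (fun b : (i : Fin K) → A i => b k = a'),
            (∑ j ∈ S, ∏ i ∈ S, v j i (b i)) * C := by
          refine le_trans (Finset.abs_sum_le_sum_abs _ _) (Finset.sum_le_sum fun b _ => ?_)
          rw [← sub_mul, abs_mul]
          exact mul_le_mul (pointwise b) (hC b) (abs_nonneg _)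
            (Finset.sum_nonneg fun j _ => Finset.prod_nonneg fun i _ => by
              by_cases h1 : i < j <;> by_cases h2 : i = j <;>
                simp [hv, h1, h2, hπ_nonneg, hμ_nonneg, abs_nonneg])
      _ = (∑ j ∈ S, ∑ b ∈ univ.filter (fun b : (i : Fin K) → A i => b k = a'),
            ∏ i ∈ S, v j i (b i)) * C := by
          rw [← Finset.sum_mul, Finset.sum_comm]
      _ = (∑ j ∈ S, ∏ i ∈ S, ∑ a, v j i a) * C := by
          congr 1
          exact Finset.sum_congr rfl fun j _ => sum_fiber_prod_erase A k a' (v j)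
      _ ≤ (∑ j ∈ S, δbar) * C := by
          exact mul_le_mul_of_nonneg_right (Finset.sum_le_sum hcol) hC0
      _ = ((K : ℝ) - 1) * δbar * C := by
          rw [Finset.sum_const, nsmul_eq_mul, hScard]
  intro ak
  rw [hΔ ak]
  have h2 : |∑ a', π k a' * (E π ε a' - E μ ε a')| ≤ ((K : ℝ) - 1) * δbar * C := by
    refine le_trans (Finset.abs_sum_le_sum_abs _ _) ?_
    calc ∑ a', |π k a' * (E π ε a' - E μ ε a')|
        ≤ ∑ a', π k a' * (((K : ℝ) - 1) * δbar * C) :=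
          Finset.sum_le_sum fun a' _ => by
            rw [abs_mul, abs_of_nonneg (hπ_nonneg k a')]
            exact mul_le_mul_of_nonneg_left (key a') (hπ_nonneg k a')
      _ = ((K : ℝ) - 1) * δbar * C := by rw [← Finset.sum_mul, hπ_sum k, one_mul]
  have h1 := key ak
  have htri : |(E π ε ak - E μ ε ak) - ∑ a', π k a' * (E π ε a' - E μ ε a')|
      ≤ |E π ε ak - E μ ε ak| + |∑ a', π k a' * (E π ε a' - E μ ε a')| := by
    rw [sub_eq_add_neg]
    exact le_trans (abs_add_le _ _) (by rw [abs_neg])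
  linarith
end

section
/- (Full advantage variance bound) Under the additive-reward assumption and exact indirect-effect evaluation, the CAPO advantage at agent k is a linear functional wᵀφ̂ whose coefficient vector satisfies ‖w‖_2² ≤ 2 + 2(K-k): the direct-effect block contributes at most 2 and each downstream agent j > k contributes a coefficient block p_j - q_j (difference of two probability vectors) with squared ℓ2 norm at most 2. Consequently, if Cov(φ̂) ⪯ (R_max²/(λ+Nκ_μ))·I, then Var(Â_k) ≤ (2 + 2(K-k))·R_max²/(λ + Nκ_μ). -/
open Matrix Finset


private lemma prob_diff_sq_le {A : ℕ} (u v : Fin A → ℝ)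
    (hu : ∀ a, 0 ≤ u a) (hus : ∑ a, u a = 1)
    (hv : ∀ a, 0 ≤ v a) (hvs : ∑ a, v a = 1) :
    ∑ a, (u a - v a) ^ 2 ≤ 2 := by
  have hstep : ∑ a, (u a - v a) ^ 2 ≤ ∑ a, (u a + v a) := by
    apply Finset.sum_le_sum
    intro a _
    have hu1 : u a ≤ 1 := by
      rw [← hus]; exact Finset.single_le_sum (fun b _ => hu b) (mem_univ a)
    have hv1 : v a ≤ 1 := by
      rw [← hvs]; exact Finset.single_le_sum (fun b _ => hv b) (mem_univ a)
    nlinarith [hu a, hv a, mul_nonneg (hu a) (hv a)]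
  calc ∑ a, (u a - v a) ^ 2 ≤ ∑ a, (u a + v a) := hstep
    _ = 2 := by rw [Finset.sum_add_distrib, hus, hvs]; norm_num

/-- Full CAPO advantage variance bound.
`φ : Ω → Fin K × Fin A → ℝ` is the random concatenation of per-agent component
vectors.  The CAPO advantage at agent `k` is the linear functional `wᵀφ` whose
coefficient vector `w` has: on the focal block `k`, a standard basis vector
(at the realized action `ak`) minus the probability vector `πk`; on each
downstream block `j > k`, the difference `p j - q j` of two probability
vectors; and zero on upstream blocks.  Then `‖w‖₂² ≤ 2 + 2·#{j > k}` and,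
if `Cov(φ) ⪯ (R_max²/(λ+Nκ))·I`, then
`Var(wᵀφ) ≤ (2 + 2·#{j > k})·R_max²/(λ+Nκ)`. -/
theorem stmt13_full_advantage_variance_bound
    {Ω : Type*} [Fintype Ω] {K A : ℕ}
    (pr : Ω → ℝ) (hpr_nonneg : ∀ ω, 0 ≤ pr ω) (hpr_sum : ∑ ω, pr ω = 1)
    (φ : Ω → Fin K × Fin A → ℝ)
    (m : Fin K × Fin A → ℝ) (hm : ∀ i, m i = ∑ ω, pr ω * φ ω i)
    (Cov : Matrix (Fin K × Fin A) (Fin K × Fin A) ℝ)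
    (hCov : ∀ i j, Cov i j = ∑ ω, pr ω * ((φ ω i - m i) * (φ ω j - m j)))
    (Rmax lam κ : ℝ) (N : ℕ)
    (hc : 0 < Rmax ^ 2 / (lam + N * κ))
    (hCov_le : ((Rmax ^ 2 / (lam + N * κ)) •
        (1 : Matrix (Fin K × Fin A) (Fin K × Fin A) ℝ) - Cov).PosSemidef)
    (k : Fin K) (ak : Fin A)
    (πk : Fin A → ℝ) (hπk_nonneg : ∀ a, 0 ≤ πk a) (hπk_sum : ∑ a, πk a = 1)
    (p q : Fin K → Fin A → ℝ)
    (hp_nonneg : ∀ j a, 0 ≤ p j a) (hp_sum : ∀ j, ∑ a, p j a = 1)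
    (hq_nonneg : ∀ j a, 0 ≤ q j a) (hq_sum : ∀ j, ∑ a, q j a = 1)
    (w : Fin K × Fin A → ℝ)
    (hw : ∀ i : Fin K × Fin A, w i =
      if i.1 = k then (if i.2 = ak then (1 : ℝ) else 0) - πk i.2
      else if k < i.1 then p i.1 i.2 - q i.1 i.2
      else 0)
    (Var : ℝ)
    (hVar : Var = ∑ ω, pr ω * ((∑ i, w i * φ ω i) - ∑ i, w i * m i) ^ 2) :
    (∑ i, w i ^ 2) ≤ 2 + 2 * ((univ.filter fun j : Fin K => k < j).card : ℝ)
    ∧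
    Var ≤ (2 + 2 * ((univ.filter fun j : Fin K => k < j).card : ℝ))
            * (Rmax ^ 2 / (lam + N * κ)) := by
  set c := Rmax ^ 2 / (lam + N * κ) with hcdef
  set Bd := ((univ.filter fun j : Fin K => k < j).card : ℝ) with hBd
  -- Part 1: norm bound
  have hnorm : (∑ i, w i ^ 2) ≤ 2 + 2 * Bd := by
    have hsplit : (∑ i : Fin K × Fin A, w i ^ 2)
        = ∑ j : Fin K, ∑ a : Fin A, w (j, a) ^ 2 := by
      rw [Fintype.sum_prod_type]
    rw [hsplit]
    have hblock : ∀ j : Fin K, (∑ a : Fin A, w (j, a) ^ 2)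
        ≤ (if j = k then 2 else 0) + (if k < j then 2 else 0) := by
      intro j
      by_cases hjk : j = k
      · subst hjk
        rw [if_pos rfl, if_neg (lt_irrefl j), add_zero]
        set e : Fin A → ℝ := fun b => if b = ak then 1 else 0 with he
        have heq : (∑ a : Fin A, w (j, a) ^ 2)
            = ∑ a : Fin A, (e a - πk a) ^ 2 := by
          apply Finset.sum_congr rfl
          intro a _
          rw [hw (j, a)]
          simp [he]
        rw [heq]
        exact prob_diff_sq_le e πk
          (fun a => by simp only [he]; split <;> norm_num)
          (by simp [he]) hπk_nonneg hπk_sum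
      · by_cases hlt : k < j
        · simp only [if_neg hjk, if_pos hlt, zero_add]
          have : (∑ a : Fin A, w (j, a) ^ 2)
              = ∑ a : Fin A, (p j a - q j a) ^ 2 := by
            apply Finset.sum_congr rfl
            intro a _
            rw [hw (j, a)]
            simp [hjk, hlt]
          rw [this]
          exact prob_diff_sq_le _ _ (hp_nonneg j) (hp_sum j) (hq_nonneg j) (hq_sum j)
        · simp only [if_neg hjk, if_neg hlt, add_zero]
          have : (∑ a : Fin A, w (j, a) ^ 2) = 0 := by
            apply Finset.sum_eq_zero
            intro a _
            rw [hw (j, a)]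
            simp [hjk, hlt]
          simp [this]
    calc (∑ j : Fin K, ∑ a : Fin A, w (j, a) ^ 2)
        ≤ ∑ j : Fin K, ((if j = k then (2:ℝ) else 0) + (if k < j then 2 else 0)) :=
          Finset.sum_le_sum fun j _ => hblock j
      _ = 2 + 2 * Bd := by
          rw [Finset.sum_add_distrib, Finset.sum_ite_eq' univ k (fun _ => (2:ℝ))]
          have : (∑ j : Fin K, if k < j then (2:ℝ) else 0)
              = ∑ j ∈ univ.filter (fun j : Fin K => k < j), (2:ℝ) := by
            rw [Finset.sum_filter]
          rw [this, Finset.sum_const, nsmul_eq_mul]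
          simp [hBd, mul_comm]
  refine ⟨hnorm, ?_⟩
  -- Part 2: variance bound
  have hVar' : Var = ∑ i, ∑ j, w i * w j * Cov i j := by
    have h1 : ∀ ω, (∑ i, w i * φ ω i) - ∑ i, w i * m i
        = ∑ i, w i * (φ ω i - m i) := by
      intro ω; rw [← Finset.sum_sub_distrib]
      exact Finset.sum_congr rfl fun i _ => by ring
    calc Var = ∑ ω, ∑ i, ∑ j,
          w i * w j * (pr ω * ((φ ω i - m i) * (φ ω j - m j))) := by
          rw [hVar]
          apply Finset.sum_congr rfl
          intro ω _
          rw [h1 ω, sq, Finset.sum_mul_sum, Finset.mul_sum]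
          apply Finset.sum_congr rfl
          intro i _
          rw [Finset.mul_sum]
          exact Finset.sum_congr rfl fun j _ => by ring
      _ = ∑ i, ∑ j, w i * w j * Cov i j := by
          rw [Finset.sum_comm]
          apply Finset.sum_congr rfl
          intro i _
          rw [Finset.sum_comm]
          apply Finset.sum_congr rfl
          intro j _
          rw [hCov i j, Finset.mul_sum]
  have hpsd := hCov_le.dotProduct_mulVec_nonneg w
  have hstar : star w = w := by
    funext i; simp
  rw [hstar] at hpsd
  have hquad : (0:ℝ) ≤ c * (∑ i, w i ^ 2) - ∑ i, ∑ j, w i * w j * Cov i j := by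
    have hdot : w ⬝ᵥ ((c • (1 : Matrix (Fin K × Fin A) (Fin K × Fin A) ℝ) - Cov) *ᵥ w)
        = c * (∑ i, w i ^ 2) - ∑ i, ∑ j, w i * w j * Cov i j := by
      rw [Matrix.sub_mulVec, dotProduct_sub, Matrix.smul_mulVec,
        Matrix.one_mulVec, dotProduct_smul, smul_eq_mul]
      congr 1
      · simp only [dotProduct, Finset.mul_sum, Pi.smul_apply, smul_eq_mul]
        apply Finset.sum_congr rfl
        intro i _
        ring
      · simp only [dotProduct, Matrix.mulVec, Finset.mul_sum]
        apply Finset.sum_congr rfl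
        intro i _
        apply Finset.sum_congr rfl
        intro j _
        ring
    rw [← hdot]
    exact hpsd
  have h2 : Var ≤ c * (∑ i, w i ^ 2) := by
    rw [hVar']; linarith
  calc Var ≤ c * (∑ i, w i ^ 2) := h2
    _ ≤ c * (2 + 2 * Bd) := by
        exact mul_le_mul_of_nonneg_left hnorm hc.le
    _ = (2 + 2 * Bd) * c := mul_comm _ _
end
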